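/- Assume the data process (Y_i) satisfies the Chazottes–Gouëzel concentration property with constants C > 0 and Lipschitz constant L > 0 of the observable g, and let μ = g_*ν. Then for every n ∈ ℕ and all ξ, ξ' ∈ H^D, the random variable (L̂^μ(ξ,n) − L^μ(ξ)) − (L̂^μ(ξ',n) − L^μ(ξ')) is sub-Gaussian with variance proxy at most (C L²/n)·(C₁/B² + √d/B)²·‖ξ − ξ'‖²_{C¹}; that is, writing W for this random variable, E[exp(τ(W − E W))] ≤ exp(τ²σ²/2) for all τ ∈ ℝ with σ² = (C L²/n)(C₁/B² + √d/B)² ‖ξ − ξ'‖²_{C¹}. -/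

import Mathlib

open MeasureTheory Real Set
open scoped ENNReal NNReal

noncomputable section

abbrev Euc (d : ℕ) := EuclideanSpace ℝ (Fin d)

def cube (d : ℕ) : Set (Euc d) := {x | ∀ i, x i ∈ Set.Icc (0:ℝ) 1}

def HolderNormLE {E F : Type*} [NormedAddCommGroup E] [NormedSpace ℝ E]
    [NormedAddCommGroup F] [NormedSpace ℝ F] (k : ℕ) (α Kb : ℝ) (f : E → F) (A : Set E) :
    Prop :=
  ContDiffOn ℝ k f A ∧
  ∃ a b : ℝ, 0 ≤ a ∧ 0 ≤ b ∧ a + b ≤ Kb ∧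
    (∀ i ≤ k, ∀ x ∈ A, ‖iteratedFDerivWithin ℝ i f A x‖ ≤ a) ∧
    (∀ x ∈ A, ∀ y ∈ A,
      ‖iteratedFDerivWithin ℝ k f A x - iteratedFDerivWithin ℝ k f A y‖ ≤ b * ‖x - y‖ ^ α)

/-- The discriminator hypothesis space `H^D`. -/
def memHD (d k : ℕ) (α B C₁ C₂ : ℝ) (ξ : Euc d → ℝ) : Prop :=
  (∀ y ∈ cube d, ξ y ∈ Set.Ioo (0:ℝ) 1) ∧
  (∀ y ∈ cube d, B ≤ ξ y ∧ ξ y ≤ 1 - B) ∧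
  (∀ y ∈ cube d, ‖fderivWithin ℝ ξ (cube d) y‖ ≤ C₁) ∧
  HolderNormLE (k - 1) α C₂ ξ (cube d)

/-- The `C¹`-norm on a set `A`. -/
def C1normOn {d : ℕ} {F : Type*} [NormedAddCommGroup F] [NormedSpace ℝ F]
    (f : Euc d → F) (A : Set (Euc d)) : ℝ :=
  max (⨆ x : A, ‖f x.1‖)
    (⨆ i : Fin d, ⨆ x : A, ‖fderivWithin ℝ f A x.1 (EuclideanSpace.single i 1)‖)

/-- `L^μ(ξ)`. -/
def Lmu {d : ℕ} (μ : Measure (Euc d)) (ξ : Euc d → ℝ) : ℝ := ∫ y, Real.log (ξ y) ∂μ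

/-- `L̂^μ(ξ,n)` for a realization `Y` of the data. -/
def empLmu {d : ℕ} (Y : ℕ → Euc d) (n : ℕ) (ξ : Euc d → ℝ) : ℝ :=
  (n : ℝ)⁻¹ * ∑ i ∈ Finset.range n, Real.log (ξ (Y i))

/-!
The increment equals `K (X, T X, …, T^{n-1} X) - c` for a constant `c` and the empirical average
`K x = n⁻¹ ∑ᵢ F (xᵢ)` of `F = (log ξ - log ξ') ∘ g`, so the concentration property applies as soon
as `K` has bounded differences: changing one coordinate moves `K` by at most `Lip F / n` times the
distance, and `Lip F ≤ L · Lip (log ξ - log ξ')` on the cube. By the mean value theorem the latter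
is bounded by the supremum of
`‖ξ⁻¹ Dξ - ξ'⁻¹ Dξ'‖ ≤ ‖Dξ'‖ |ξ - ξ'| / B² + ‖D(ξ - ξ')‖ / B ≤ (C₁ / B² + √d / B) ‖ξ - ξ'‖_{C¹}`,
where `‖D(ξ - ξ')‖ ≤ √d maxᵢ ‖∂ᵢ(ξ - ξ')‖` is Cauchy–Schwarz. Summing the `n` squared constants
`(Lip F / n)²` gives the variance proxy.
-/

lemma cube_eq_preimage_pi (d : ℕ) :
    cube d = EuclideanSpace.equiv (Fin d) ℝ ⁻¹' Set.univ.pi fun _ => Icc 0 1 := by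
  ext x
  simp only [cube, Set.mem_preimage, Set.mem_univ_pi]
  rfl

lemma convex_cube (d : ℕ) : Convex ℝ (cube d) := by
  rw [cube_eq_preimage_pi]
  exact (convex_pi fun _ _ => convex_Icc 0 1).linear_preimage
    (EuclideanSpace.equiv (Fin d) ℝ).toLinearEquiv.toLinearMap

lemma uniqueDiffOn_cube (d : ℕ) : UniqueDiffOn ℝ (cube d) := by
  rw [cube_eq_preimage_pi]
  exact (EuclideanSpace.equiv (Fin d) ℝ).uniqueDiffOn_preimage_iff.2
    (UniqueDiffOn.univ_pi fun _ => uniqueDiffOn_Icc zero_lt_one)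

lemma ContinuousLinearMap.opNorm_le_sqrt_card_mul {ι F : Type*} [Fintype ι] [DecidableEq ι]
    [NormedAddCommGroup F] [NormedSpace ℝ F] (D : EuclideanSpace ℝ ι →L[ℝ] F) {m : ℝ}
    (hm : 0 ≤ m) (h : ∀ i, ‖D (EuclideanSpace.single i 1)‖ ≤ m) :
    ‖D‖ ≤ √(Fintype.card ι) * m := by
  refine D.opNorm_le_bound (by positivity) fun x => ?_
  have hx : ∑ i, x i • EuclideanSpace.single i (1 : ℝ) = x := by
    simpa using (EuclideanSpace.basisFun ι ℝ).sum_repr x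
  calc ‖D x‖ = ‖∑ i, x i • D (EuclideanSpace.single i 1)‖ := by
        conv_lhs => rw [← hx]
        simp only [map_sum, map_smul]
    _ ≤ ∑ i, |x i| * m := by
        refine norm_sum_le_of_le _ fun i _ => ?_
        rw [norm_smul, Real.norm_eq_abs]
        exact mul_le_mul_of_nonneg_left (h i) (abs_nonneg _)
    _ = (∑ i, |x i| * 1) * m := by simp [Finset.sum_mul]
    _ ≤ (√(∑ i, |x i| ^ 2) * √(∑ _i : ι, (1 : ℝ) ^ 2)) * m := by
        gcongr
        exact Real.sum_mul_le_sqrt_mul_sqrt _ _ _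
    _ = √(Fintype.card ι) * m * ‖x‖ := by
        rw [EuclideanSpace.norm_eq]
        simp only [Real.norm_eq_abs, one_pow, Finset.sum_const, Finset.card_univ, nsmul_eq_mul,
          mul_one]
        ring

section C1norm

variable {d : ℕ} {F : Type*} [NormedAddCommGroup F] [NormedSpace ℝ F] {f : Euc d → F}
  {A : Set (Euc d)} {y : Euc d}

lemma C1normOn_nonneg : 0 ≤ C1normOn f A :=
  le_max_of_le_left (Real.iSup_nonneg fun _ => norm_nonneg _)

lemma norm_le_C1normOn (hf : BddAbove (range fun x : A => ‖f x‖)) (hy : y ∈ A) :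
    ‖f y‖ ≤ C1normOn f A :=
  (le_ciSup hf ⟨y, hy⟩).trans (le_max_left _ _)

lemma norm_fderivWithin_le_sqrt_mul_C1normOn
    (hf : BddAbove (range fun x : A => ‖fderivWithin ℝ f A x‖)) (hy : y ∈ A) :
    ‖fderivWithin ℝ f A y‖ ≤ √d * C1normOn f A := by
  simpa using (fderivWithin ℝ f A y).opNorm_le_sqrt_card_mul C1normOn_nonneg fun i => by
    obtain ⟨c, hc⟩ := hf
    have hbdd : BddAbove
        (range fun x : A => ‖fderivWithin ℝ f A x (EuclideanSpace.single i 1)‖) := by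
      refine ⟨c, forall_mem_range.2 fun x => ?_⟩
      simpa using ((fderivWithin ℝ f A x).le_opNorm (EuclideanSpace.single i 1)).trans
        (mul_le_mul_of_nonneg_right (hc (mem_range_self x)) (norm_nonneg _))
    calc ‖fderivWithin ℝ f A y (EuclideanSpace.single i 1)‖
        ≤ ⨆ x : A, ‖fderivWithin ℝ f A x (EuclideanSpace.single i 1)‖ := le_ciSup hbdd ⟨y, hy⟩
      _ ≤ ⨆ j : Fin d, ⨆ x : A, ‖fderivWithin ℝ f A x (EuclideanSpace.single j 1)‖ :=
          le_ciSup (f := fun j : Fin d =>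
            ⨆ x : A, ‖fderivWithin ℝ f A x (EuclideanSpace.single j 1)‖) (finite_range _).bddAbove i
      _ ≤ C1normOn f A := le_max_right _ _

end C1norm

lemma norm_inv_smul_sub_inv_smul_le {E : Type*} [SeminormedAddCommGroup E] [NormedSpace ℝ E]
    {a b B c N D : ℝ} {u v : E} (hB : 0 < B) (ha : B ≤ a) (hb : B ≤ b) (hv : ‖v‖ ≤ c)
    (hab : |a - b| ≤ N) (huv : ‖u - v‖ ≤ D) :
    ‖a⁻¹ • u - b⁻¹ • v‖ ≤ c * N / B ^ 2 + D / B := by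
  have ha0 : 0 < a := hB.trans_le ha
  have hb0 : 0 < b := hB.trans_le hb
  have hinv : |a⁻¹ - b⁻¹| ≤ N / B ^ 2 := by
    rw [inv_sub_inv ha0.ne' hb0.ne', abs_div, abs_sub_comm, abs_of_pos (mul_pos ha0 hb0), sq]
    exact div_le_div₀ ((abs_nonneg _).trans hab) hab (mul_pos hB hB) (mul_le_mul ha hb hB.le ha0.le)
  calc ‖a⁻¹ • u - b⁻¹ • v‖ = ‖a⁻¹ • (u - v) + (a⁻¹ - b⁻¹) • v‖ := by
        rw [smul_sub, sub_smul, sub_add_sub_cancel]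
    _ ≤ a⁻¹ * ‖u - v‖ + |a⁻¹ - b⁻¹| * ‖v‖ := by
        refine (norm_add_le _ _).trans_eq ?_
        rw [norm_smul, norm_smul, Real.norm_of_nonneg (inv_nonneg.2 ha0.le), Real.norm_eq_abs]
    _ ≤ B⁻¹ * D + N / B ^ 2 * c :=
        add_le_add (mul_le_mul (inv_anti₀ hB ha) huv (norm_nonneg _) (inv_nonneg.2 hB.le))
          (mul_le_mul hinv hv (norm_nonneg _) (div_nonneg ((abs_nonneg _).trans hab) (sq_nonneg B)))
    _ = c * N / B ^ 2 + D / B := by ring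

theorem lipschitzOnWith_log_sub_log {E : Type*} [NormedAddCommGroup E] [NormedSpace ℝ E]
    {A : Set E} (hA : Convex ℝ A) {f h : E → ℝ} (hf : DifferentiableOn ℝ f A)
    (hh : DifferentiableOn ℝ h A) {B c N D : ℝ} (hB : 0 < B) (hfB : ∀ y ∈ A, B ≤ f y)
    (hhB : ∀ y ∈ A, B ≤ h y) (hDh : ∀ y ∈ A, ‖fderivWithin ℝ h A y‖ ≤ c)
    (hN : ∀ y ∈ A, |f y - h y| ≤ N)
    (hD : ∀ y ∈ A, ‖fderivWithin ℝ f A y - fderivWithin ℝ h A y‖ ≤ D) :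
    LipschitzOnWith (c * N / B ^ 2 + D / B).toNNReal (fun y => log (f y) - log (h y)) A := by
  refine hA.lipschitzOnWith_of_nnnorm_hasFDerivWithin_le
    (f' := fun y => (f y)⁻¹ • fderivWithin ℝ f A y - (h y)⁻¹ • fderivWithin ℝ h A y)
    (fun y hy => ?_) fun y hy => ?_
  · exact ((hasDerivAt_log (hB.trans_le (hfB y hy)).ne').comp_hasFDerivWithinAt y
      (hf y hy).hasFDerivWithinAt).sub
      ((hasDerivAt_log (hB.trans_le (hhB y hy)).ne').comp_hasFDerivWithinAt y
        (hh y hy).hasFDerivWithinAt)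
  · rw [← norm_toNNReal]
    exact Real.toNNReal_le_toNNReal
      (norm_inv_smul_sub_inv_smul_le hB (hfB y hy) (hhB y hy) (hDh y hy) (hN y hy) (hD y hy))

namespace memHD

variable {d k : ℕ} {α B C₁ C₂ : ℝ} {ξ ξ' : Euc d → ℝ}

lemma differentiableOn (hk : 2 ≤ k) (hξ : memHD d k α B C₁ C₂ ξ) :
    DifferentiableOn ℝ ξ (cube d) :=
  hξ.2.2.2.1.differentiableOn (by exact_mod_cast (show k - 1 ≠ 0 by omega))

lemma abs_log_sub_log_le (hB : 0 < B) (hξ : memHD d k α B C₁ C₂ ξ)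
    (hξ' : memHD d k α B C₁ C₂ ξ') {y : Euc d} (hy : y ∈ cube d) :
    |log (ξ y) - log (ξ' y)| ≤ -log B := by
  have bounds : ∀ {ζ : Euc d → ℝ}, memHD d k α B C₁ C₂ ζ → log B ≤ log (ζ y) ∧ log (ζ y) ≤ 0 :=
    fun hζ => ⟨log_le_log hB (hζ.2.1 y hy).1,
      log_nonpos (hζ.1 y hy).1.le (hζ.1 y hy).2.le⟩
  obtain ⟨h₁, h₂⟩ := bounds hξ
  obtain ⟨h₁', h₂'⟩ := bounds hξ'
  exact abs_sub_le_iff.2 ⟨by linarith, by linarith⟩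

lemma lipschitzOnWith_log_sub_log (hk : 2 ≤ k) (hB : 0 < B) (hξ : memHD d k α B C₁ C₂ ξ)
    (hξ' : memHD d k α B C₁ C₂ ξ') :
    LipschitzOnWith ((C₁ / B ^ 2 + √d / B) * C1normOn (fun y => ξ y - ξ' y) (cube d)).toNNReal
      (fun y => log (ξ y) - log (ξ' y)) (cube d) := by
  have hdiff := hξ.differentiableOn hk
  have hdiff' := hξ'.differentiableOn hk
  have hfderiv_sub : ∀ y ∈ cube d, fderivWithin ℝ (fun y => ξ y - ξ' y) (cube d) y =
      fderivWithin ℝ ξ (cube d) y - fderivWithin ℝ ξ' (cube d) y := fun y hy =>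
    fderivWithin_sub (uniqueDiffOn_cube d y hy) (hdiff y hy) (hdiff' y hy)
  have hN : ∀ y ∈ cube d, |ξ y - ξ' y| ≤ C1normOn (fun y => ξ y - ξ' y) (cube d) := by
    refine fun y hy => norm_le_C1normOn (f := fun y => ξ y - ξ' y)
      ⟨1, forall_mem_range.2 fun x => ?_⟩ hy
    obtain ⟨⟨h₀, h₁⟩, ⟨h₀', h₁'⟩⟩ := And.intro (hξ.1 x x.2) (hξ'.1 x x.2)
    exact abs_sub_le_iff.2 ⟨by linarith, by linarith⟩
  have hD : ∀ y ∈ cube d, ‖fderivWithin ℝ ξ (cube d) y - fderivWithin ℝ ξ' (cube d) y‖ ≤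
      √d * C1normOn (fun y => ξ y - ξ' y) (cube d) := fun y hy => by
    rw [← hfderiv_sub y hy]
    refine norm_fderivWithin_le_sqrt_mul_C1normOn ⟨C₁ + C₁, forall_mem_range.2 fun x => ?_⟩ hy
    rw [hfderiv_sub x x.2]
    exact (norm_sub_le _ _).trans (add_le_add (hξ.2.2.1 x x.2) (hξ'.2.2.1 x x.2))
  have h := _root_.lipschitzOnWith_log_sub_log (convex_cube d) hdiff hdiff' hB
    (fun y hy => (hξ.2.1 y hy).1) (fun y hy => (hξ'.2.1 y hy).1) hξ'.2.2.1 hN hD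
  rwa [mul_div_right_comm, mul_div_right_comm _ _ B, ← add_mul] at h

end memHD

lemma abs_avg_update_sub_avg_le {M : Type*} [PseudoMetricSpace M] {F : M → ℝ} {c : ℝ≥0}
    (hF : LipschitzWith c F) {n : ℕ} (x : Fin n → M) (i : Fin n) (a : M) :
    |(n : ℝ)⁻¹ * ∑ j, F (Function.update x i a j) - (n : ℝ)⁻¹ * ∑ j, F (x j)| ≤
      c / n * dist a (x i) := by
  have hsum : ∑ j, F (Function.update x i a j) - ∑ j, F (x j) = F a - F (x i) := by
    simp_rw [Function.apply_update (fun _ => F)]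
    rw [Finset.sum_update_of_mem (Finset.mem_univ i),
      ← Finset.add_sum_erase _ _ (Finset.mem_univ i), Finset.sdiff_singleton_eq_erase]
    ring
  rw [← mul_sub, hsum, abs_mul, abs_of_nonneg (by positivity), div_eq_inv_mul, mul_assoc,
    ← Real.dist_eq]
  exact mul_le_mul_of_nonneg_left (hF.dist_le_mul a (x i)) (by positivity)

lemma integrable_avg_comp {Ω M : Type*} [MeasurableSpace Ω] [MeasurableSpace M] {P : Measure Ω}
    [IsFiniteMeasure P] {F : M → ℝ} (hF : Measurable F) {b : ℝ} (hb : ∀ u, |F u| ≤ b) {n : ℕ}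
    {Z : Fin n → Ω → M} (hZ : ∀ i, Measurable (Z i)) :
    Integrable (fun ω => (n : ℝ)⁻¹ * ∑ i, F (Z i ω)) P :=
  (integrable_finsetSum _ fun i _ => (integrable_const b).mono'
    (hF.comp (hZ i)).aestronglyMeasurable (ae_of_all _ fun _ => hb _)).const_mul _

lemma empLmu_sub_empLmu {d : ℕ} (Y : ℕ → Euc d) (n : ℕ) (ξ ξ' : Euc d → ℝ) :
    empLmu Y n ξ - empLmu Y n ξ' = (n : ℝ)⁻¹ * ∑ i : Fin n, (log (ξ (Y i)) - log (ξ' (Y i))) := by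
  rw [empLmu, empLmu, ← mul_sub, ← Finset.sum_sub_distrib, Finset.sum_range]

theorem statement10_general {d k : ℕ} (hk : 2 ≤ k) {α B C₁ C₂ C L : ℝ}
    (hB : B ∈ Set.Ioo (0:ℝ) (1/2)) (hC₁ : 0 < C₁) (hL : 0 < L)
    {Ω : Type*} [MeasurableSpace Ω] (P : Measure Ω) [IsProbabilityMeasure P]
    {M : Type*} [MetricSpace M] [MeasurableSpace M] [BorelSpace M]
    (T : M → M) (hT : Measurable T)
    (ν : Measure M)
    (g : M → Euc d) (hg : LipschitzWith (Real.toNNReal L) g)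
    (hgcube : ∀ x, g x ∈ cube d)
    (X : Ω → M) (hX : Measurable X)
    -- Chazottes–Gouëzel concentration property
    (hCG : ∀ (m : ℕ) (K : (Fin m → M) → ℝ) (Lc : Fin m → ℝ),
      (∀ (x : Fin m → M) (i : Fin m) (a : M),
        |K (Function.update x i a) - K x| ≤ Lc i * dist a (x i)) →
      ∀ τ : ℝ,
        (∫ ω, Real.exp (τ * (K (fun i => T^[(i : ℕ)] (X ω)) -
            ∫ ω', K (fun i => T^[(i : ℕ)] (X ω')) ∂P)) ∂P) ≤
          Real.exp (τ ^ 2 * C * (∑ i, (Lc i) ^ 2) / 2))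
    (n : ℕ)
    (ξ ξ' : Euc d → ℝ) (hξ : memHD d k α B C₁ C₂ ξ) (hξ' : memHD d k α B C₁ C₂ ξ') :
    ∀ τ : ℝ,
      (∫ ω, Real.exp (τ *
          (((empLmu (fun i => g (T^[i] (X ω))) n ξ - Lmu (Measure.map g ν) ξ) -
            (empLmu (fun i => g (T^[i] (X ω))) n ξ' - Lmu (Measure.map g ν) ξ')) -
           ∫ ω', ((empLmu (fun i => g (T^[i] (X ω'))) n ξ - Lmu (Measure.map g ν) ξ) -
            (empLmu (fun i => g (T^[i] (X ω'))) n ξ' - Lmu (Measure.map g ν) ξ')) ∂P)) ∂P)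
        ≤
      Real.exp (τ ^ 2 *
        ((C * L ^ 2 / n) * (C₁ / B ^ 2 + Real.sqrt d / B) ^ 2 *
          (C1normOn (fun y => ξ y - ξ' y) (cube d)) ^ 2) / 2) := by
  intro τ
  set N := C1normOn (fun y => ξ y - ξ' y) (cube d)
  set F : M → ℝ := fun u => log (ξ (g u)) - log (ξ' (g u))
  have hF : LipschitzWith (((C₁ / B ^ 2 + √d / B) * N).toNNReal * L.toNNReal) F :=
    lipschitzOnWith_univ.1 ((hξ.lipschitzOnWith_log_sub_log hk hB.1 hξ').comp
      hg.lipschitzOnWith fun u _ => hgcube u)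
  set K : (Fin n → M) → ℝ := fun x => (n : ℝ)⁻¹ * ∑ i, F (x i)
  set c := Lmu (Measure.map g ν) ξ - Lmu (Measure.map g ν) ξ'
  have hW : ∀ ω, (empLmu (fun i => g (T^[i] (X ω))) n ξ - Lmu (Measure.map g ν) ξ) -
      (empLmu (fun i => g (T^[i] (X ω))) n ξ' - Lmu (Measure.map g ν) ξ') =
      K (fun i => T^[(i : ℕ)] (X ω)) - c := fun ω => by
    rw [sub_sub_sub_comm, empLmu_sub_empLmu]
  have hKint : Integrable (fun ω => K (fun i => T^[(i : ℕ)] (X ω))) P :=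
    integrable_avg_comp hF.continuous.measurable
      (fun u => hξ.abs_log_sub_log_le hB.1 hξ' (hgcube u)) fun i => (hT.iterate i).comp hX
  simp_rw [hW, integral_sub hKint (integrable_const c), integral_const, probReal_univ, one_smul,
    sub_sub_sub_cancel_right]
  refine (hCG n K _ (abs_avg_update_sub_avg_le hF) τ).trans_eq ?_
  have hN : 0 ≤ (C₁ / B ^ 2 + √d / B) * N :=
    mul_nonneg (add_nonneg (div_nonneg hC₁.le (sq_nonneg B)) (div_nonneg (sqrt_nonneg _) hB.1.le))
      C1normOn_nonneg
  rw [NNReal.coe_mul, Real.coe_toNNReal _ hN, Real.coe_toNNReal _ hL.le, Finset.sum_const,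
    Finset.card_univ, Fintype.card_fin, nsmul_eq_mul]
  rcases n.eq_zero_or_pos with rfl | hn
  · simp -- both exponents vanish, as `(0 : ℝ)⁻¹ = 0`
  · field_simp

/-- **Subgaussian increments of the empirical process.** Under the Chazottes–Gouëzel
concentration property, for `ξ, ξ' ∈ H^D` the increment
`W = (L̂^μ(ξ,n) − L^μ(ξ)) − (L̂^μ(ξ',n) − L^μ(ξ'))` is subgaussian with variance proxy
`(CL²/n)(C₁/B² + √d/B)²‖ξ−ξ'‖²_{C¹}`. -/
theorem statement10 {d k : ℕ} (hd : 0 < d) (hk : 2 ≤ k) {α B C₁ C₂ C L : ℝ}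
    (hα : α ∈ Set.Ioc (0:ℝ) 1) (hB : B ∈ Set.Ioo (0:ℝ) (1/2)) (hC₁ : 0 < C₁)
    (hC₂ : 0 < C₂) (hC : 0 < C) (hL : 0 < L)
    {Ω : Type*} [MeasurableSpace Ω] (P : Measure Ω) [IsProbabilityMeasure P]
    {M : Type*} [MetricSpace M] [MeasurableSpace M] [BorelSpace M]
    (T : M → M) (hT : Measurable T)
    (ν : Measure M) [IsProbabilityMeasure ν] (hinv : Measure.map T ν = ν)
    (g : M → Euc d) (hg : LipschitzWith (Real.toNNReal L) g)
    (hgcube : ∀ x, g x ∈ cube d)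
    (X : Ω → M) (hX : Measurable X) (hlaw : Measure.map X P = ν)
    -- Chazottes–Gouëzel concentration property
    (hCG : ∀ (m : ℕ) (K : (Fin m → M) → ℝ) (Lc : Fin m → ℝ),
      (∀ (x : Fin m → M) (i : Fin m) (a : M),
        |K (Function.update x i a) - K x| ≤ Lc i * dist a (x i)) →
      ∀ τ : ℝ,
        (∫ ω, Real.exp (τ * (K (fun i => T^[(i : ℕ)] (X ω)) -
            ∫ ω', K (fun i => T^[(i : ℕ)] (X ω')) ∂P)) ∂P) ≤
          Real.exp (τ ^ 2 * C * (∑ i, (Lc i) ^ 2) / 2))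
    (n : ℕ) (hn : 0 < n)
    (ξ ξ' : Euc d → ℝ) (hξ : memHD d k α B C₁ C₂ ξ) (hξ' : memHD d k α B C₁ C₂ ξ') :
    ∀ τ : ℝ,
      (∫ ω, Real.exp (τ *
          (((empLmu (fun i => g (T^[i] (X ω))) n ξ - Lmu (Measure.map g ν) ξ) -
            (empLmu (fun i => g (T^[i] (X ω))) n ξ' - Lmu (Measure.map g ν) ξ')) -
           ∫ ω', ((empLmu (fun i => g (T^[i] (X ω'))) n ξ - Lmu (Measure.map g ν) ξ) -
            (empLmu (fun i => g (T^[i] (X ω'))) n ξ' - Lmu (Measure.map g ν) ξ')) ∂P)) ∂P)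
        ≤
      Real.exp (τ ^ 2 *
        ((C * L ^ 2 / n) * (C₁ / B ^ 2 + Real.sqrt d / B) ^ 2 *
          (C1normOn (fun y => ξ y - ξ' y) (cube d)) ^ 2) / 2) :=
  statement10_general hk hB hC₁ hL P T hT ν g hg hgcube X hX hCG n ξ ξ' hξ hξ'
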